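/- Suppose F : ℝ → ℂ has Fourier transform F̂ with ⟨s⟩² F̂(s) ∈ L¹(ℝ), and let k ∈ ℝ. Define G(λ) = d/dλ[(e^{ikλ} F(λ) − F(0))/λ]. Then the Fourier transform of G is integrable and ‖Ĝ‖_{L¹} ≲ ⟨k⟩² ‖⟨s⟩² F̂(s)‖_{L¹}, with implicit constant independent of k and F. -/

import Mathlib

/-!
Put `ν_a := sign(a) 𝟙_{(0,a]}`, so that `∫ ν_a(t) e^{iλt} dt = (e^{iλa} - 1)/(iλ)`. With
`a = s + k` and Fubini, `(e^{ikλ} F(λ) - F(0))/λ = ∫ e^{iλt} H(t) dt` for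
`H(t) = i ∫ ν_{s+k}(t) F̂(s) ds`, hence `Ĝ(t) = i t H(t)` by differentiating under the integral.
Since `|t| ≤ |s + k|` on the support of `ν_{s+k}`, this gives
`‖Ĝ‖₁ ≤ ∫ (s + k)² |F̂(s)| ds ≤ 2 ⟨k⟩² ‖⟨s⟩² F̂‖₁`.
-/

open MeasureTheory Real Complex Set
open scoped Interval

noncomputable def signedIntervalIndicator (a : ℝ) : ℝ → ℝ :=
  (Ι 0 a).indicator fun _ => if 0 ≤ a then 1 else -1

namespace signedIntervalIndicator

theorem integral_smul {E : Type*} [NormedAddCommGroup E] [NormedSpace ℝ E] (a : ℝ) (g : ℝ → E) :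
    ∫ t, signedIntervalIndicator a t • g t = ∫ t in (0 : ℝ)..a, g t := by
  have hind : (fun t => signedIntervalIndicator a t • g t) =
      (Ι 0 a).indicator fun t => (if 0 ≤ a then 1 else -1 : ℝ) • g t := by
    ext t
    unfold signedIntervalIndicator indicator
    split_ifs <;> simp
  rw [hind, integral_indicator measurableSet_uIoc, MeasureTheory.integral_smul,
    intervalIntegral.intervalIntegral_eq_integral_uIoc]

theorem norm_eq (a t : ℝ) : ‖signedIntervalIndicator a t‖ = (Ι 0 a).indicator 1 t := by
  unfold signedIntervalIndicator indicator
  split_ifs <;> simp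

theorem integral_norm (a : ℝ) : ∫ t, ‖signedIntervalIndicator a t‖ = |a| := by
  simp_rw [norm_eq, integral_indicator_one measurableSet_uIoc, measureReal_def,
    Real.volume_uIoc, sub_zero, ENNReal.toReal_ofReal (abs_nonneg a)]

theorem integrable (a : ℝ) : Integrable (signedIntervalIndicator a) :=
  (integrable_indicator_iff measurableSet_uIoc).2 <|
    integrableOn_const (by simp [Real.volume_uIoc])

theorem norm_mul_norm_le (a t : ℝ) :
    ‖t‖ * ‖signedIntervalIndicator a t‖ ≤ ‖a‖ * ‖signedIntervalIndicator a t‖ := by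
  rw [norm_eq, Real.norm_eq_abs, Real.norm_eq_abs]
  by_cases ht : t ∈ Ι 0 a
  · rw [indicator_of_mem ht, Pi.one_apply, mul_one, mul_one]
    rcases mem_uIoc.1 ht with ⟨h₀, h₁⟩ | ⟨h₀, h₁⟩
    · exact abs_le_abs_of_nonneg h₀.le h₁
    · rw [abs_of_nonpos h₁, abs_of_neg (h₀.trans_le h₁)]; linarith
  · simp [indicator_of_notMem ht]

theorem measurable_uncurry : Measurable (Function.uncurry signedIntervalIndicator) := by
  have hset : MeasurableSet {p : ℝ × ℝ | p.2 ∈ Ι 0 p.1} :=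
    (measurableSet_lt (measurable_const.min measurable_fst) measurable_snd).inter
      (measurableSet_le measurable_snd (measurable_const.max measurable_fst))
  change Measurable fun p : ℝ × ℝ =>
    {q : ℝ × ℝ | q.2 ∈ Ι 0 q.1}.indicator (fun q => if 0 ≤ q.1 then (1 : ℝ) else -1) p
  exact (Measurable.ite (measurableSet_le measurable_const measurable_fst) measurable_const
    measurable_const).indicator hset

theorem integral_smul_exp (a : ℝ) {m : ℝ} (hm : m ≠ 0) :
    ∫ t, signedIntervalIndicator a t • exp (I * m * t) = (exp (I * m * a) - 1) / (I * m) := by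
  rw [integral_smul, integral_exp_mul_complex (by simpa using hm)]
  simp

end signedIntervalIndicator

noncomputable def intervalKernel (a : ℝ → ℝ) (f : ℝ → ℂ) (p : ℝ × ℝ) : ℂ :=
  signedIntervalIndicator (a p.1) p.2 • f p.1

namespace intervalKernel

variable {a : ℝ → ℝ} {f : ℝ → ℂ}

theorem aestronglyMeasurable (ha : Measurable a) (hf : AEStronglyMeasurable f) :
    AEStronglyMeasurable (intervalKernel a f) (volume.prod volume) :=
  ((signedIntervalIndicator.measurable_uncurry.comp
    ((ha.comp measurable_fst).prodMk measurable_snd)).aestronglyMeasurable).smul hf.comp_fst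

theorem integral_norm (a : ℝ → ℝ) (f : ℝ → ℂ) (s : ℝ) :
    ∫ t, ‖intervalKernel a f (s, t)‖ = ‖a s • f s‖ := by
  simp_rw [intervalKernel, norm_smul, integral_mul_const, signedIntervalIndicator.integral_norm,
    Real.norm_eq_abs]

theorem integrable (ha : Measurable a) (hf : AEStronglyMeasurable f)
    (haf : Integrable fun s => a s • f s) : Integrable (intervalKernel a f) (volume.prod volume) := by
  refine (integrable_prod_iff (aestronglyMeasurable ha hf)).2 ⟨ae_of_all _ fun s => ?_, ?_⟩
  · exact (signedIntervalIndicator.integrable (a s)).smul_const (f s)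
  · simpa only [integral_norm] using haf.norm

theorem norm_snd_mul_le (a : ℝ → ℝ) (f : ℝ → ℂ) (p : ℝ × ℝ) :
    ‖(p.2 : ℂ) * intervalKernel a f p‖ ≤ ‖intervalKernel a (fun s => a s • f s) p‖ := by
  simp only [intervalKernel, norm_mul, norm_smul, Complex.norm_real, ← mul_assoc,
    mul_comm _ ‖a p.1‖]
  exact mul_le_mul_of_nonneg_right (signedIntervalIndicator.norm_mul_norm_le (a p.1) p.2)
    (norm_nonneg _)

theorem integral_exp_mul_integral (ha : Measurable a) (hf : AEStronglyMeasurable f)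
    (haf : Integrable fun s => a s • f s) {m : ℝ} (hm : m ≠ 0) :
    ∫ t : ℝ, exp (I * m * t) * ∫ s, intervalKernel a f (s, t) =
      ∫ s, (exp (I * m * a s) - 1) / (I * m) * f s := by
  have hint : Integrable (fun p : ℝ × ℝ => exp (I * m * p.2) * intervalKernel a f p)
      (volume.prod volume) :=
    (integrable ha hf haf).bdd_mul (c := 1) (by fun_prop)
      (ae_of_all _ fun p => by simp [Complex.norm_exp])
  calc ∫ t : ℝ, exp (I * m * t) * ∫ s, intervalKernel a f (s, t)
      = ∫ t : ℝ, ∫ s, exp (I * m * t) * intervalKernel a f (s, t) := by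
        simp_rw [integral_const_mul]
    _ = ∫ s, ∫ t : ℝ, exp (I * m * t) * intervalKernel a f (s, t) :=
        (integral_integral_swap hint).symm
    _ = ∫ s, (exp (I * m * a s) - 1) / (I * m) * f s := by
        congr 1 with s
        simp_rw [intervalKernel, ← signedIntervalIndicator.integral_smul_exp (a s) hm,
          ← integral_mul_const, Complex.real_smul]
        congr 1 with t
        ring

theorem integrable_snd_mul (ha : Measurable a) (hf : AEStronglyMeasurable f)
    (haaf : Integrable fun s => a s • a s • f s) :
    Integrable (fun p : ℝ × ℝ => (p.2 : ℂ) * intervalKernel a f p) (volume.prod volume) :=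
  (integrable (f := fun s => a s • f s) ha (ha.aestronglyMeasurable.smul hf) haaf).norm.mono'
    ((by fun_prop : AEStronglyMeasurable (fun p : ℝ × ℝ => (p.2 : ℂ)) _).mul
      (aestronglyMeasurable ha hf))
    (ae_of_all _ (norm_snd_mul_le a f))

theorem integral_norm_mul_integral_le (ha : Measurable a) (hf : AEStronglyMeasurable f)
    (haaf : Integrable fun s => a s • a s • f s) :
    ∫ t : ℝ, ‖(t : ℂ) * ∫ s, intervalKernel a f (s, t)‖ ≤ ∫ s, ‖a s • a s • f s‖ := by
  have hK := integrable_snd_mul ha hf haaf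
  have hK' := integrable (f := fun s => a s • f s) ha (ha.aestronglyMeasurable.smul hf) haaf
  calc ∫ t : ℝ, ‖(t : ℂ) * ∫ s, intervalKernel a f (s, t)‖
      ≤ ∫ t : ℝ, ∫ s, ‖(t : ℂ) * intervalKernel a f (s, t)‖ := by
        refine integral_mono_of_nonneg (ae_of_all _ fun _ => norm_nonneg _)
          hK.integral_norm_prod_right (ae_of_all _ fun t => ?_)
        simp only [← integral_const_mul]
        exact norm_integral_le_integral_norm _
    _ = ∫ p : ℝ × ℝ, ‖(p.2 : ℂ) * intervalKernel a f p‖ ∂(volume.prod volume) :=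
        (integral_prod_symm _ hK.norm).symm
    _ ≤ ∫ p : ℝ × ℝ, ‖intervalKernel a (fun s => a s • f s) p‖ ∂(volume.prod volume) :=
        integral_mono hK.norm hK'.norm (norm_snd_mul_le a f)
    _ = ∫ s, ‖a s • a s • f s‖ := by
        rw [integral_prod _ hK'.norm]
        simp_rw [integral_norm]

end intervalKernel

theorem aestronglyMeasurable_of_exp_mul {g : ℝ → ℂ} (l : ℝ)
    (h : AEStronglyMeasurable fun s : ℝ => exp (I * l * s) * g s) : AEStronglyMeasurable g := by
  refine ((by fun_prop : AEStronglyMeasurable fun s : ℝ => exp (-(I * l * s))).mul h).congr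
    (ae_of_all _ fun s => ?_)
  simp [← mul_assoc, ← Complex.exp_add]

theorem integrable_exp_mul {g : ℝ → ℂ} (hg : Integrable g) (l : ℝ) :
    Integrable fun s : ℝ => exp (I * l * s) * g s :=
  hg.bdd_mul (c := 1) (by fun_prop) (ae_of_all _ fun s => by simp [Complex.norm_exp])

theorem integral_exp_mul_eq_fourier (h : ℝ → ℂ) (m : ℝ) :
    ∫ t : ℝ, exp (I * m * t) * h t = FourierTransform.fourier h (-m / (2 * π)) := by
  rw [Real.fourier_real_eq_integral_exp_smul]
  congr 1 with t
  rw [smul_eq_mul]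
  congr 2
  push_cast
  field_simp

theorem hasDerivAt_integral_exp_mul {h : ℝ → ℂ} (hh : Integrable h)
    (hth : Integrable fun t : ℝ => (t : ℂ) * h t) (m : ℝ) :
    HasDerivAt (fun m : ℝ => ∫ t : ℝ, exp (I * m * t) * h t)
      (∫ t : ℝ, exp (I * m * t) * (I * t * h t)) m := by
  have hth' : Integrable fun t : ℝ => t • h t := by simpa [Complex.real_smul] using hth
  have hlin : HasDerivAt (fun m : ℝ => -m / (2 * π)) (-1 / (2 * π)) m := by
    simpa using ((hasDerivAt_id m).neg).div_const (2 * π)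
  simp only [integral_exp_mul_eq_fourier]
  refine ((Real.hasDerivAt_fourier hh hth' (-m / (2 * π))).scomp m hlin).congr_deriv ?_
  rw [Real.fourier_real_eq_integral_exp_smul, Real.fourier_real_eq_integral_exp_smul,
    ← integral_smul]
  congr 1 with t
  simp only [smul_eq_mul, Complex.real_smul]
  push_cast
  field_simp

theorem exp_mul_sub_div_eq_integral {F f : ℝ → ℂ} (hf : Integrable f)
    (hF : ∀ l : ℝ, F l = ∫ s : ℝ, exp (I * l * s) * f s) (k m : ℝ) :
    (exp (I * k * m) * F m - F 0) / m =
      I * ∫ s : ℝ, (exp (I * m * (s + k)) - 1) / (I * m) * f s := by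
  rw [hF, hF, ← integral_const_mul, ← integral_sub ((integrable_exp_mul hf m).const_mul _)
    (integrable_exp_mul hf 0), ← integral_div, ← integral_const_mul]
  congr 1 with s
  rw [mul_add, Complex.exp_add, ofReal_zero, mul_zero, zero_mul, Complex.exp_zero]
  field_simp

theorem norm_add_smul_le {E : Type*} [NormedAddCommGroup E] [NormedSpace ℝ E] (s k : ℝ) (z : E) :
    ‖(s + k) • z‖ ≤ 2 * (1 + k ^ 2) * ((1 + s ^ 2) * ‖z‖) := by
  rw [norm_smul, Real.norm_eq_abs, ← mul_assoc]
  refine mul_le_mul_of_nonneg_right ?_ (norm_nonneg z)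
  nlinarith [sq_abs (s + k), sq_nonneg (|s + k| - 1), sq_nonneg (s - k), sq_nonneg (s * k)]

theorem norm_add_smul_add_smul_le {E : Type*} [NormedAddCommGroup E] [NormedSpace ℝ E]
    (s k : ℝ) (z : E) : ‖(s + k) • (s + k) • z‖ ≤ 2 * (1 + k ^ 2) * ((1 + s ^ 2) * ‖z‖) := by
  rw [norm_smul, norm_smul, ← mul_assoc, ← mul_assoc, Real.norm_eq_abs, abs_mul_abs_self]
  refine mul_le_mul_of_nonneg_right ?_ (norm_nonneg z)
  nlinarith [sq_nonneg (s - k), sq_nonneg (s * k)]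

noncomputable def diffQuotientDensity (k : ℝ) (f : ℝ → ℂ) (t : ℝ) : ℂ :=
  I * ∫ s, intervalKernel (· + k) f (s, t)

theorem sub_div_eq_integral_exp_mul_diffQuotientDensity {F f : ℝ → ℂ} {k : ℝ}
    (hf : AEStronglyMeasurable f) (hf₀ : Integrable f) (hf₁ : Integrable fun s : ℝ => (s + k) • f s)
    (hF : ∀ l : ℝ, F l = ∫ s : ℝ, exp (I * l * s) * f s) {m : ℝ} (hm : m ≠ 0) :
    (exp (I * k * m) * F m - F 0) / m = ∫ t : ℝ, exp (I * m * t) * diffQuotientDensity k f t := by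
  have hfubini := intervalKernel.integral_exp_mul_integral (by fun_prop) hf hf₁ hm
  push_cast at hfubini
  rw [exp_mul_sub_div_eq_integral hf₀ hF, ← hfubini, ← integral_const_mul]
  congr 1 with t
  rw [diffQuotientDensity]
  ring

theorem exists_fourier_deriv_sub_div {F f : ℝ → ℂ} (k : ℝ) (hf : AEStronglyMeasurable f)
    (hint : Integrable fun s : ℝ => (1 + s ^ 2) * ‖f s‖)
    (hF : ∀ l : ℝ, F l = ∫ s : ℝ, exp (I * l * s) * f s) :
    ∃ Ghat : ℝ → ℂ, Integrable Ghat ∧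
      (∀ l : ℝ, l ≠ 0 →
        deriv (fun m : ℝ => (exp (I * k * m) * F m - F 0) / m) l =
          ∫ s : ℝ, exp (I * l * s) * Ghat s) ∧
      (∫ s : ℝ, ‖Ghat s‖) ≤ 2 * (1 + k ^ 2) * ∫ s : ℝ, (1 + s ^ 2) * ‖f s‖ := by
  have hweight : ∀ {g : ℝ → ℂ}, AEStronglyMeasurable g →
      (∀ s, ‖g s‖ ≤ 2 * (1 + k ^ 2) * ((1 + s ^ 2) * ‖f s‖)) → Integrable g :=
    fun hg hle => (hint.const_mul _).mono' hg (ae_of_all _ hle)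
  have ha : Measurable fun s : ℝ => s + k := measurable_id.add_const k
  have hf₀ : Integrable f := hint.mono' hf (ae_of_all _ fun s =>
    le_mul_of_one_le_left (norm_nonneg _) (by nlinarith [sq_nonneg s]))
  have hf₁ : Integrable fun s : ℝ => (s + k) • f s :=
    hweight (ha.aestronglyMeasurable.smul hf) fun s => norm_add_smul_le s k (f s)
  have hf₂ : Integrable fun s : ℝ => (s + k) • (s + k) • f s :=
    hweight (ha.aestronglyMeasurable.smul (ha.aestronglyMeasurable.smul hf))
      fun s => norm_add_smul_add_smul_le s k (f s)
  set H := diffQuotientDensity k f with hH_def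
  have hH : Integrable H :=
    ((intervalKernel.integrable ha hf hf₁).integral_prod_right).const_mul I
  have htH : Integrable fun t : ℝ => (t : ℂ) * H t := by
    refine ((intervalKernel.integrable_snd_mul ha hf hf₂).integral_prod_right.const_mul I).congr
      (ae_of_all _ fun t => ?_)
    simp only [hH_def, diffQuotientDensity, integral_const_mul]
    ring
  refine ⟨fun t => I * t * H t, ?_, fun l hl => ?_, ?_⟩
  · simpa only [mul_assoc] using htH.const_mul I
  · have hev : (fun m : ℝ => (exp (I * k * m) * F m - F 0) / m) =ᶠ[nhds l]
        fun m : ℝ => ∫ t : ℝ, exp (I * m * t) * H t :=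
      (eventually_ne_nhds hl).mono fun m hm =>
        sub_div_eq_integral_exp_mul_diffQuotientDensity hf hf₀ hf₁ hF hm
    rw [hev.deriv_eq, (hasDerivAt_integral_exp_mul hH htH l).deriv]
  · calc ∫ t : ℝ, ‖I * t * H t‖
        = ∫ t : ℝ, ‖(t : ℂ) * ∫ s, intervalKernel (· + k) f (s, t)‖ := by
          simp only [hH_def, diffQuotientDensity, norm_mul, Complex.norm_I, one_mul]
      _ ≤ ∫ s : ℝ, ‖(s + k) • (s + k) • f s‖ :=
          intervalKernel.integral_norm_mul_integral_le ha hf hf₂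
      _ ≤ ∫ s : ℝ, 2 * (1 + k ^ 2) * ((1 + s ^ 2) * ‖f s‖) :=
          integral_mono hf₂.norm (hint.const_mul _) fun s => norm_add_smul_add_smul_le s k (f s)
      _ = 2 * (1 + k ^ 2) * ∫ s : ℝ, (1 + s ^ 2) * ‖f s‖ := integral_const_mul _ _

/-- If `⟨s⟩² F̂(s) ∈ L¹` and `F(λ) = ∫ e^{iλs} F̂(s) ds`, then for any `k` the
function `G(λ) = d/dλ[(e^{ikλ}F(λ) − F(0))/λ]` has integrable Fourier
transform with `‖Ĝ‖₁ ≲ ⟨k⟩² ‖⟨s⟩²F̂‖₁`, uniformly in `k` and `F`. -/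
theorem deriv_quotient_fourier_bound :
    ∃ C : ℝ, 0 < C ∧
      ∀ (F Fhat : ℝ → ℂ) (k : ℝ),
        Integrable (fun s : ℝ => (1 + s ^ 2) * ‖Fhat s‖) →
        (∀ l : ℝ, F l = ∫ s : ℝ, Complex.exp (Complex.I * l * s) * Fhat s) →
        ∃ Ghat : ℝ → ℂ, Integrable Ghat ∧
          (∀ l : ℝ, l ≠ 0 →
            deriv (fun m : ℝ => (Complex.exp (Complex.I * k * m) * F m - F 0) / m) l =
              ∫ s : ℝ, Complex.exp (Complex.I * l * s) * Ghat s) ∧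
          (∫ s : ℝ, ‖Ghat s‖) ≤ C * (1 + k ^ 2) * ∫ s : ℝ, (1 + s ^ 2) * ‖Fhat s‖ := by
  refine ⟨2, two_pos, fun F Fhat k hint hF => ?_⟩
  by_cases hmeas : AEStronglyMeasurable Fhat
  · exact exists_fourier_deriv_sub_div k hmeas hint hF
  -- a non-measurable `Fhat` has junk integrals, so `F = 0` is represented by `0` as well
  have hF₀ : ∀ l : ℝ, F l = ∫ s : ℝ, exp (I * l * s) * (0 : ℝ → ℂ) s := fun l => by
    rw [hF, integral_non_aestronglyMeasurable (mt (aestronglyMeasurable_of_exp_mul l) hmeas)]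
    simp
  obtain ⟨Ghat, hGhat, hderiv, hbound⟩ :=
    exists_fourier_deriv_sub_div k aestronglyMeasurable_zero (by simp) hF₀
  refine ⟨Ghat, hGhat, hderiv, hbound.trans ?_⟩
  simp only [Pi.zero_apply, norm_zero, mul_zero, integral_zero]
  exact mul_nonneg (by positivity) (integral_nonneg fun s => by positivity)
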